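/- Let m ≥ 2 be an integer, c > 1/m a real number, and let a, d, K be nonnegative real numbers satisfying a + d ≤ (c - 1/m)·K. Then 2a² - 2(c - 2/m)·a·K - (2/m)(c - 1/m)·K² ≤ -(2c/(c - 1/m))·a·d - (2/(m(c - 1/m)))·d². -/
import Mathlib

theorem lemA2_algebra (m : ℕ) (hm : 2 ≤ m) (c : ℝ) (hc : 1 / (m : ℝ) < c)
    (a d K : ℝ) (ha : 0 ≤ a) (hd : 0 ≤ d) (hK : 0 ≤ K)
    (hpinch : a + d ≤ (c - 1 / (m : ℝ)) * K) :
    2 * a ^ 2 - 2 * (c - 2 / (m : ℝ)) * a * K - (2 / (m : ℝ)) * (c - 1 / (m : ℝ)) * K ^ 2 ≤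
      -(2 * c / (c - 1 / (m : ℝ))) * a * d - (2 / ((m : ℝ) * (c - 1 / (m : ℝ)))) * d ^ 2 := by
  have hm0 : (0:ℝ) < m := by positivity
  have hε : (0:ℝ) < c - 1 / m := by linarith
  have hX : -(2 * c / (c - 1 / (m:ℝ))) * a * d - (2 / ((m:ℝ) * (c - 1 / m))) * d ^ 2
      = (-(2 * c) * a * d - (2 / (m:ℝ)) * d ^ 2) / (c - 1 / m) := by
    field_simp
  rw [hX, le_div_iff₀ hε]
  have hp : 0 ≤ (c - 1 / (m:ℝ)) * K - (a + d) := by linarith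
  have hu : (0:ℝ) < 1 / m := by positivity
  have h1 : 0 ≤ (c - 1 / (m:ℝ)) * a * ((c - 1 / m) * K - (a + d)) :=
    mul_nonneg (mul_nonneg hε.le ha) hp
  have h2 : 0 ≤ (1 / (m:ℝ)) * ((c - 1 / m) * K + d) * ((c - 1 / m) * K - (a + d)) :=
    mul_nonneg (mul_nonneg hu.le (add_nonneg (mul_nonneg hε.le hK) hd)) hp
  have key : (-(2 * c) * a * d - (2 / (m:ℝ)) * d ^ 2)
      - (2 * a ^ 2 - 2 * (c - 2 / (m:ℝ)) * a * K - (2 / m) * (c - 1 / m) * K ^ 2) * (c - 1 / m)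
      = 2 * ((c - 1 / (m:ℝ)) * a * ((c - 1 / m) * K - (a + d)))
        + 2 * ((1 / (m:ℝ)) * ((c - 1 / m) * K + d) * ((c - 1 / m) * K - (a + d))) := by ring
  linarith [h1, h2, key]
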